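/- Let H be a graded bialgebra over a field k (graded by the natural numbers) which is connected, i.e. its degree-zero component is one-dimensional, spanned by the unit. Then H admits an antipode, and this antipode is unique; in other words, H is a Hopf algebra in a unique way. -/

import Mathlib

/-!
In the convolution ring of `End(H)` write `id = 1 - f` with `f = u ∘ ε - id`. Connectedness makes
`f` vanish in degree `0`, and since `Δ` respects the grading, `f ^ (n + 1)` vanishes in degrees
`≤ n`. So the geometric series `∑ f ^ i` is a finite sum on each homogeneous component and
assembles into a two-sided convolution inverse of `id`; uniqueness is uniqueness of inverses.
-/

open Coalgebra TensorProduct WithConv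

namespace DirectSum.IsInternal

variable {R ι M N : Type*} [Semiring R] [AddCommMonoid M] [Module R M] [AddCommMonoid N]
  [Module R N] {𝒜 : ι → Submodule R M} [DecidableEq ι]

theorem linearMap_ext (h : IsInternal 𝒜) {φ ψ : M →ₗ[R] N}
    (H : ∀ i, ∀ x ∈ 𝒜 i, φ x = ψ x) : φ = ψ :=
  LinearMap.ext_on (s := ⋃ i, (𝒜 i : Set M))
    (by simpa [Submodule.span_iUnion] using h.submodule_iSup_eq_top)
    fun x hx ↦ by
      obtain ⟨i, hi⟩ := Set.mem_iUnion.mp hx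
      exact H i x hi

noncomputable def lift (h : IsInternal 𝒜) (F : ι → M →ₗ[R] N) : M →ₗ[R] N :=
  toModule R ι N (fun i ↦ F i ∘ₗ (𝒜 i).subtype) ∘ₗ
    (LinearEquiv.ofBijective (coeLinearMap 𝒜) h).symm.toLinearMap

theorem lift_apply_of_mem (h : IsInternal 𝒜) (F : ι → M →ₗ[R] N) {i : ι} {x : M}
    (hx : x ∈ 𝒜 i) : h.lift F x = F i x := by
  have hx' : (LinearEquiv.ofBijective (coeLinearMap 𝒜) h).symm x = lof R ι (𝒜 ·) i ⟨x, hx⟩ := by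
    rw [LinearEquiv.symm_apply_eq]
    exact (coeLinearMap_of 𝒜 i ⟨x, hx⟩).symm
  simp [lift, hx', toModule_lof]

end DirectSum.IsInternal

def IsGradedComul {R C : Type*} [CommSemiring R] [AddCommMonoid C] [Module R C]
    [CoalgebraStruct R C] (𝒜 : ℕ → Submodule R C) : Prop :=
  ∀ n : ℕ, ∀ x ∈ 𝒜 n, comul (R := R) x ∈
    ⨆ p : {p : ℕ × ℕ // p.1 + p.2 = n}, LinearMap.range (mapIncl (𝒜 p.1.1) (𝒜 p.1.2))

namespace LinearMap

variable {R C A : Type*} [CommSemiring R] [AddCommMonoid C] [Module R C]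
  {𝒜 : ℕ → Submodule R C}

theorem convMul_apply_eq_zero_of_mem [CoalgebraStruct R C] [NonUnitalNonAssocSemiring A]
    [Module R A] [SMulCommClass R A A] [IsScalarTower R A A]
    (hΔ : IsGradedComul 𝒜) {f g : WithConv (C →ₗ[R] A)} {n : ℕ}
    (hfg : ∀ p q, p + q = n → ∀ a ∈ 𝒜 p, ∀ b ∈ 𝒜 q, f a * g b = 0)
    {x : C} (hx : x ∈ 𝒜 n) : (f * g) x = 0 := by
  suffices h : (⨆ p : {p : ℕ × ℕ // p.1 + p.2 = n},
      range (mapIncl (𝒜 p.1.1) (𝒜 p.1.2))) ≤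
        ker (mul' R A ∘ₗ map f.ofConv g.ofConv) from h (hΔ n x hx)
  refine iSup_le fun ⟨⟨p, q⟩, hpq⟩ ↦ range_le_ker_iff.mpr ?_
  ext ⟨a, ha⟩ ⟨b, hb⟩
  exact hfg p q hpq a ha b hb

variable [Coalgebra R C] [Ring A] [Algebra R A]

theorem convMul_apply_congr (hΔ : IsGradedComul 𝒜) {f f' g g' : WithConv (C →ₗ[R] A)} {n : ℕ}
    (hf : ∀ p ≤ n, ∀ a ∈ 𝒜 p, f a = f' a) (hg : ∀ q ≤ n, ∀ b ∈ 𝒜 q, g b = g' b)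
    {x : C} (hx : x ∈ 𝒜 n) : (f * g) x = (f' * g') x := by
  have hsplit : f * g - f' * g' = (f - f') * g + f' * (g - g') := by noncomm_ring
  have h₁ : ((f - f') * g) x = 0 :=
    convMul_apply_eq_zero_of_mem hΔ (fun p q hpq a ha b _ ↦ by
      simp [hf p (by omega) a ha]) hx
  have h₂ : (f' * (g - g')) x = 0 :=
    convMul_apply_eq_zero_of_mem hΔ (fun p q hpq a _ b hb ↦ by
      simp [hg q (by omega) b hb]) hx
  have h := congr($hsplit x)
  simp only [ofConv_sub, ofConv_add, sub_apply, add_apply, h₁, h₂, add_zero] at h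
  exact sub_eq_zero.mp h

theorem pow_apply_eq_zero_of_lt (hΔ : IsGradedComul 𝒜) {f : WithConv (C →ₗ[R] A)}
    (hf : ∀ x ∈ 𝒜 0, f x = 0) {m n : ℕ} (hnm : n < m) {x : C} (hx : x ∈ 𝒜 n) :
    (f ^ m) x = 0 := by
  induction m generalizing n x with
  | zero => omega
  | succ m ih =>
    rw [pow_succ']
    refine convMul_apply_eq_zero_of_mem hΔ (fun p q hpq a ha b hb ↦ ?_) hx
    rcases Nat.eq_zero_or_pos p with rfl | hp
    · rw [hf a ha, zero_mul]
    · rw [ih (by omega) hb, mul_zero]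

theorem geom_sum_apply_eq_of_le (hΔ : IsGradedComul 𝒜) {f : WithConv (C →ₗ[R] A)}
    (hf : ∀ x ∈ 𝒜 0, f x = 0) {n N : ℕ} (hnN : n ≤ N) {x : C} (hx : x ∈ 𝒜 n) :
    (∑ i ∈ Finset.range (N + 1), f ^ i) x = (∑ i ∈ Finset.range (n + 1), f ^ i) x := by
  simp only [ofConv_sum, sum_apply]
  refine (Finset.sum_subset (Finset.range_subset_range.mpr (by omega)) fun i _ hi ↦ ?_).symm
  exact pow_apply_eq_zero_of_lt hΔ hf (by simpa using hi) hx

theorem isUnit_of_apply_eq_one_apply_of_mem_zero (hint : DirectSum.IsInternal 𝒜)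
    (hΔ : IsGradedComul 𝒜) {φ : WithConv (C →ₗ[R] A)}
    (hφ : ∀ x ∈ 𝒜 0, φ x = (1 : WithConv (C →ₗ[R] A)) x) : IsUnit φ := by
  set f := 1 - φ
  have hf : ∀ x ∈ 𝒜 0, f x = 0 := fun x hx ↦ by simp [f, hφ x hx]
  set S : ℕ → WithConv (C →ₗ[R] A) := fun n ↦ ∑ i ∈ Finset.range (n + 1), f ^ i
  -- `∑ f ^ i` is locally finite: on `𝒜 n` it is the partial sum `S n`
  set T := toConv (hint.lift fun n ↦ (S n).ofConv)
  have hT : ∀ {n q}, q ≤ n → ∀ b ∈ 𝒜 q, T b = S n b := fun hqn b hb ↦ by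
    simp only [T, S, hint.lift_apply_of_mem _ hb, geom_sum_apply_eq_of_le hΔ hf hqn hb]
  have hφ_eq : φ = 1 - f := by simp [f]
  refine isUnit_iff_exists.mpr ⟨T, WithConv.ext (hint.linearMap_ext fun n x hx ↦ ?_),
    WithConv.ext (hint.linearMap_ext fun n x hx ↦ ?_)⟩
  · calc (φ * T) x = (φ * S n) x :=
          convMul_apply_congr hΔ (fun _ _ _ _ ↦ rfl) (fun _ hq b hb ↦ hT hq b hb) hx
      _ = (1 : WithConv (C →ₗ[R] A)) x := by
          rw [hφ_eq, mul_neg_geom_sum, ofConv_sub, sub_apply,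
            pow_apply_eq_zero_of_lt hΔ hf n.lt_succ_self hx, sub_zero]
  · calc (T * φ) x = (S n * φ) x :=
          convMul_apply_congr hΔ (fun _ hp a ha ↦ hT hp a ha) (fun _ _ _ _ ↦ rfl) hx
      _ = (1 : WithConv (C →ₗ[R] A)) x := by
          rw [hφ_eq, geom_sum_mul_neg, ofConv_sub, sub_apply,
            pow_apply_eq_zero_of_lt hΔ hf n.lt_succ_self hx, sub_zero]

end LinearMap

theorem stmt0_general {k H : Type*} [Field k] [Ring H] [Bialgebra k H]
    (𝒜 : ℕ → Submodule k H)
    (hinternal : DirectSum.IsInternal 𝒜)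
    (hone : 𝒜 0 = Submodule.span k {1})
    (hcomul : ∀ n : ℕ, ∀ x ∈ 𝒜 n,
      Coalgebra.comul (R := k) x ∈
        ⨆ p : {p : ℕ × ℕ // p.1 + p.2 = n},
          LinearMap.range (TensorProduct.mapIncl (𝒜 p.1.1) (𝒜 p.1.2))) :
    ∃! S : H →ₗ[k] H,
      (LinearMap.mul' k H) ∘ₗ (TensorProduct.map S LinearMap.id) ∘ₗ Coalgebra.comul
        = (Algebra.linearMap k H) ∘ₗ Coalgebra.counit ∧
      (LinearMap.mul' k H) ∘ₗ (TensorProduct.map LinearMap.id S) ∘ₗ Coalgebra.comul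
        = (Algebra.linearMap k H) ∘ₗ Coalgebra.counit := by
  have hid : ∀ x ∈ 𝒜 0, toConv (LinearMap.id : H →ₗ[k] H) x = (1 : WithConv (H →ₗ[k] H)) x := by
    intro x hx
    obtain ⟨c, rfl⟩ := Submodule.mem_span_singleton.mp (hone ▸ hx)
    simp [Algebra.smul_def]
  obtain ⟨⟨_, S, hid_S, hS_id⟩, rfl⟩ :=
    LinearMap.isUnit_of_apply_eq_one_apply_of_mem_zero hinternal hcomul hid
  refine ⟨S.ofConv, ⟨congr(ofConv $hS_id), congr(ofConv $hid_S)⟩, fun T ⟨hT_id, _⟩ ↦ ?_⟩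
  exact congr(ofConv $(left_inv_eq_right_inv (b := toConv T) (WithConv.ext hT_id) hid_S))

/-- A connected graded bialgebra over a field admits a unique antipode, i.e. it is a
Hopf algebra in a unique way. -/
theorem stmt0 {k H : Type*} [Field k] [Ring H] [Bialgebra k H]
    (𝒜 : ℕ → Submodule k H)
    (hinternal : DirectSum.IsInternal 𝒜)
    (hone : 𝒜 0 = Submodule.span k {1})
    (hmul : ∀ i j : ℕ, ∀ x ∈ 𝒜 i, ∀ y ∈ 𝒜 j, x * y ∈ 𝒜 (i + j))
    (hcomul : ∀ n : ℕ, ∀ x ∈ 𝒜 n,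
      Coalgebra.comul (R := k) x ∈
        ⨆ p : {p : ℕ × ℕ // p.1 + p.2 = n},
          LinearMap.range (TensorProduct.mapIncl (𝒜 p.1.1) (𝒜 p.1.2)))
    (hcounit : ∀ n : ℕ, 0 < n → ∀ x ∈ 𝒜 n, Coalgebra.counit (R := k) x = 0) :
    ∃! S : H →ₗ[k] H,
      (LinearMap.mul' k H) ∘ₗ (TensorProduct.map S LinearMap.id) ∘ₗ Coalgebra.comul
        = (Algebra.linearMap k H) ∘ₗ Coalgebra.counit ∧
      (LinearMap.mul' k H) ∘ₗ (TensorProduct.map LinearMap.id S) ∘ₗ Coalgebra.comul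
        = (Algebra.linearMap k H) ∘ₗ Coalgebra.counit :=
  stmt0_general 𝒜 hinternal hone hcomul
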